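/- (Atomic cut property of derivability in a base) For every base B, finite multisets of atoms P = [p₁, …, pₙ] and S, and atom q, the following are equivalent: (1) P ⨾ S ⊢_B q; (2) for every base X ⊇ B and all finite multisets of atoms T₁, …, Tₙ, if Tᵢ ⊢_X pᵢ for all i = 1, …, n, then T₁ ⨾ … ⨾ Tₙ ⨾ S ⊢_X q. -/

import Mathlib

/-- Formulas of intuitionistic multiplicative linear logic over a
countably infinite set of atoms (here: `ℕ`). -/
inductive MForm : Type where
  | atom : ℕ → MForm
  | tensor : MForm → MForm → MForm
  | unit : MForm
  | limp : MForm → MForm → MForm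
deriving DecidableEq

/-- An atomic rule `(P₁ ▷ p₁, …, Pₙ ▷ pₙ) ⇒ p`: a (possibly empty) finite
set of atomic sequents together with a conclusion atom. -/
structure MRule : Type where
  prems : Finset (Multiset ℕ × ℕ)
  concl : ℕ

/-- A base is a set of atomic rules. -/
abbrev MBase := Set MRule

/-- Derivability in a base `B`: `P ⊢_B p`. -/
inductive MDer (B : MBase) : Multiset ℕ → ℕ → Prop where
  | ref (p : ℕ) : MDer B {p} p
  | app {r : MRule} (hr : r ∈ B) (S : Multiset ℕ × ℕ → Multiset ℕ)
      (h : ∀ pr ∈ r.prems, MDer B (S pr + pr.1) pr.2) :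
      MDer B (r.prems.sum S) r.concl

/-- The resource-indexed support relation `⊩_B^P φ`. -/
def MSupp : MForm → MBase → Multiset ℕ → Prop
  | .atom p, B, P => MDer B P p
  | .tensor φ ψ, B, P => ∀ X : MBase, B ⊆ X → ∀ U : Multiset ℕ, ∀ p : ℕ,
      (∀ Y : MBase, X ⊆ Y → ∀ V : Multiset ℕ,
        (∃ V₁ V₂ : Multiset ℕ, V = V₁ + V₂ ∧ MSupp φ Y V₁ ∧ MSupp ψ Y V₂) →
        MDer Y (U + V) p) →
      MDer X (P + U) p
  | .unit, B, P => ∀ X : MBase, B ⊆ X → ∀ U : Multiset ℕ, ∀ p : ℕ,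
      MDer X U p → MDer X (P + U) p
  | .limp φ ψ, B, P => ∀ X : MBase, B ⊆ X → ∀ U : Multiset ℕ,
      MSupp φ X U → MSupp ψ X (P + U)

/-- Support of a multiset of formulas: `⊩_B^P Γ`, obtained by splitting
the resources `P` among the members of `Γ`. -/
inductive MSuppCtx (B : MBase) : Multiset ℕ → Multiset MForm → Prop where
  | nil : MSuppCtx B 0 0
  | cons {P Q : Multiset ℕ} {φ : MForm} {Γ : Multiset MForm} :
      MSupp φ B P → MSuppCtx B Q Γ → MSuppCtx B (P + Q) (φ ::ₘ Γ)

/-- Support of a sequent: `Γ ⊩_B^P φ` (clause (Inf)). -/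
def MSuppInf (Γ : Multiset MForm) (B : MBase) (P : Multiset ℕ) (φ : MForm) : Prop :=
  ∀ X : MBase, B ⊆ X → ∀ U : Multiset ℕ, MSuppCtx X U Γ → MSupp φ X (P + U)

/-- Validity: `Γ ⊩ φ` iff `Γ ⊩_B^∅ φ` for every base `B`. -/
def MValid (Γ : Multiset MForm) (φ : MForm) : Prop :=
  ∀ B : MBase, MSuppInf Γ B 0 φ

/-- The natural deduction system NIMLL: `Γ ⊢ φ`. -/
inductive NIMLL : Multiset MForm → MForm → Prop where
  | ax (φ : MForm) : NIMLL {φ} φ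
  | limpI {Γ : Multiset MForm} {φ ψ : MForm} :
      NIMLL (φ ::ₘ Γ) ψ → NIMLL Γ (.limp φ ψ)
  | limpE {Γ Δ : Multiset MForm} {φ ψ : MForm} :
      NIMLL Γ (.limp φ ψ) → NIMLL Δ φ → NIMLL (Γ + Δ) ψ
  | unitI : NIMLL 0 .unit
  | unitE {Γ Δ : Multiset MForm} {φ : MForm} :
      NIMLL Γ φ → NIMLL Δ .unit → NIMLL (Γ + Δ) φ
  | tensorI {Γ Δ : Multiset MForm} {φ ψ : MForm} :
      NIMLL Γ φ → NIMLL Δ ψ → NIMLL (Γ + Δ) (.tensor φ ψ)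
  | tensorE {Γ Δ : Multiset MForm} {φ ψ χ : MForm} :
      NIMLL Γ (.tensor φ ψ) → NIMLL (φ ::ₘ ψ ::ₘ Δ) χ → NIMLL (Γ + Δ) χ

/-!
Cutting a single atom `p` against a derivation of `p` from `T` goes by induction on the
derivation of `p ⨾ P ⊢ q`: either it is the axiom `p ⊢ p` and the result is the derivation of
`p`, or the occurrence of `p` lies in the side context of one premiss of the last rule, and the
cut is pushed into that premiss. Repeating this along `P` and using monotonicity in the base
gives (1) ⇒ (2); conversely (2) with `X = B` and `Tᵢ = pᵢ` returns (1).
-/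

namespace MDer

variable {B X : MBase}

lemma mono (hBX : B ⊆ X) {P : Multiset ℕ} {q : ℕ} (h : MDer B P q) : MDer X P q := by
  induction h with
  | ref p => exact .ref p
  | app hr S _ ih => exact .app (hBX hr) S ih

lemma cut_erase {C : Multiset ℕ} {p q : ℕ} {T : Multiset ℕ} (h : MDer X C q) (hp : p ∈ C)
    (hT : MDer X T p) : MDer X (C.erase p + T) q := by
  classical
  induction h with
  | ref r =>
    obtain rfl : p = r := Multiset.mem_singleton.1 hp
    simpa using hT
  | @app r hr S hprems ih =>
    obtain ⟨pr, hpr, hpS⟩ := Multiset.mem_sum.1 hp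
    let S' := Function.update S pr ((S pr).erase p + T)
    have hprems' : ∀ x ∈ r.prems, MDer X (S' x + x.1) x.2 := by
      intro x hx
      by_cases hx_pr : x = pr
      · subst hx_pr
        have := ih x hx (Multiset.mem_add.2 (Or.inl hpS))
        rw [Multiset.erase_add_left_pos _ hpS] at this
        simpa only [S', Function.update_self, add_right_comm] using this
      · simpa only [S', Function.update_of_ne hx_pr] using hprems x hx
    have hsum : r.prems.sum S' = (r.prems.sum S).erase p + T := by
      rw [← Finset.add_sum_erase _ _ hpr, ← Finset.add_sum_erase _ _ hpr,
        Multiset.erase_add_left_pos _ hpS, Finset.sum_congr rfl fun x hx =>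
          Function.update_of_ne (Finset.ne_of_mem_erase hx) _ S]
      simp only [Function.update_self]
      abel
    exact hsum ▸ .app hr S' hprems'

lemma cut {P : Multiset ℕ} {p q : ℕ} {T : Multiset ℕ} (h : MDer X (p ::ₘ P) q)
    (hT : MDer X T p) : MDer X (P + T) q := by
  simpa using h.cut_erase (Multiset.mem_cons_self p P) hT

lemma cut_list {L : List ℕ} {T : List (Multiset ℕ)}
    (hT : List.Forall₂ (fun t p => MDer X t p) T L) {S : Multiset ℕ} {q : ℕ}
    (h : MDer X (↑L + S) q) : MDer X (T.sum + S) q := by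
  induction hT generalizing S with
  | nil => simpa using h
  | @cons t p T L htp _ ih =>
    rw [← Multiset.cons_coe, Multiset.cons_add] at h
    have h' : MDer X (↑L + S + t) q := cut h htp
    simpa [add_comm, add_left_comm, add_assoc] using ih (S := S + t) (by simpa [add_assoc] using h')

end MDer

/-- (Atomic cut property of derivability in a base) For `P = [p₁, …, pₙ]`:
`P ⨾ S ⊢_B q` iff for every `X ⊇ B` and multisets `T₁, …, Tₙ`, if
`Tᵢ ⊢_X pᵢ` for all `i`, then `T₁ ⨾ … ⨾ Tₙ ⨾ S ⊢_X q`. -/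
theorem imll_atomic_cut (B : MBase) (L : List ℕ) (S : Multiset ℕ) (q : ℕ) :
    MDer B ((↑L : Multiset ℕ) + S) q ↔
      ∀ X : MBase, B ⊆ X → ∀ T : List (Multiset ℕ),
        List.Forall₂ (fun t p => MDer X t p) T L →
        MDer X (T.sum + S) q := by
  refine ⟨fun h X hBX T hT => MDer.cut_list hT (h.mono hBX), fun h => ?_⟩
  have hrefl : List.Forall₂ (fun t p => MDer B t p) (L.map ({·})) L :=
    List.forall₂_map_left_iff.2 (List.forall₂_same.2 fun p _ => .ref p)
  have hsum : (L.map ({·} : ℕ → Multiset ℕ)).sum = ↑L := by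
    rw [← Multiset.sum_coe, ← Multiset.map_coe, Multiset.sum_map_singleton]
  simpa only [hsum] using h B le_rfl _ hrefl
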